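/- arXiv:2007.01983 — 4 statements merged into one kernel-verified Lean document; each statement's English description precedes it below -/
import Mathlib

section
/- Let H be a real Hilbert space, V a closed vector subspace of H, and T : H → H an α-averaged nonexpansive operator for some α ∈ (0,1). Then the operator M = P_V ∘ T ∘ P_V + P_{V⊥} is α-averaged nonexpansive, where P_V and P_{V⊥} denote the orthogonal projections onto V and its orthogonal complement. -/
/-!
With `P = P_V` and `Q = P_{V⊥}`, the increments of `M = P T P + Q` split orthogonally:
`M x - M y = P (T u - T v) + Q (x - y)` with `u = P x`, `v = P y`, while the residual
`x - M x = P (u - T u)` only sees the residual of `T` at `u`. Since `P` is a contraction, the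
averagedness inequality of `T` at `(u, v)` plus the Pythagorean identity
`‖x - y‖² = ‖u - v‖² + ‖Q (x - y)‖²` give the inequality for `M` at `(x, y)`.
-/

open Submodule

def IsAveragedNonexpansive {H : Type*} [SeminormedAddCommGroup H] (α : ℝ) (T : H → H) : Prop :=
  ∀ x y : H, ‖T x - T y‖ ^ 2 ≤ ‖x - y‖ ^ 2 - ((1 - α) / α) * ‖(x - T x) - (y - T y)‖ ^ 2

section Compression

variable {H : Type*} [NormedAddCommGroup H] [InnerProductSpace ℝ H]
  (V : Submodule ℝ H) [V.HasOrthogonalProjection]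

noncomputable def compression (T : H → H) (x : H) : H :=
  V.starProjection (T (V.starProjection x)) + Vᗮ.starProjection x

theorem norm_starProjection_add_starProjection_orthogonal_sq (a b : H) :
    ‖V.starProjection a + Vᗮ.starProjection b‖ ^ 2 =
      ‖V.starProjection a‖ ^ 2 + ‖Vᗮ.starProjection b‖ ^ 2 := by
  have h : inner ℝ (V.starProjection a) (Vᗮ.starProjection b) = 0 :=
    inner_right_of_mem_orthogonal (V.starProjection_apply_mem a) (Vᗮ.starProjection_apply_mem b)
  rw [norm_add_sq_real, h]
  ring

theorem compression_sub_compression (T : H → H) (x y : H) :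
    compression V T x - compression V T y =
      V.starProjection (T (V.starProjection x) - T (V.starProjection y)) +
        Vᗮ.starProjection (x - y) := by
  simp only [compression, map_sub]
  abel

theorem sub_compression (T : H → H) (x : H) :
    x - compression V T x = V.starProjection (V.starProjection x - T (V.starProjection x)) := by
  rw [compression, starProjection_orthogonal_val, map_sub,
    starProjection_eq_self_iff.mpr (V.starProjection_apply_mem x)]
  abel

theorem isAveragedNonexpansive_compression {α : ℝ} {T : H → H}
    (hT : IsAveragedNonexpansive α T) (hα : α ∈ Set.Ioc 0 1) :
    IsAveragedNonexpansive α (compression V T) := by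
  intro x y
  set P := V.starProjection
  have hc : 0 ≤ (1 - α) / α := div_nonneg (by linarith [hα.2]) hα.1.le
  have hres : ‖(x - compression V T x) - (y - compression V T y)‖ ^ 2 ≤
      ‖(P x - T (P x)) - (P y - T (P y))‖ ^ 2 := by
    rw [sub_compression, sub_compression, ← map_sub]
    gcongr
    exact V.norm_starProjection_apply_le _
  have hPT : ‖P (T (P x) - T (P y))‖ ^ 2 ≤ ‖T (P x) - T (P y)‖ ^ 2 := by
    gcongr
    exact V.norm_starProjection_apply_le _
  calc ‖compression V T x - compression V T y‖ ^ 2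
      = ‖P (T (P x) - T (P y))‖ ^ 2 + ‖Vᗮ.starProjection (x - y)‖ ^ 2 := by
        rw [compression_sub_compression, norm_starProjection_add_starProjection_orthogonal_sq]
    _ ≤ ‖P (x - y)‖ ^ 2 - ((1 - α) / α) * ‖(P x - T (P x)) - (P y - T (P y))‖ ^ 2
          + ‖Vᗮ.starProjection (x - y)‖ ^ 2 := by
        rw [map_sub P x y]
        linarith [hT (P x) (P y)]
    _ ≤ ‖x - y‖ ^ 2 - ((1 - α) / α) * ‖(x - compression V T x) - (y - compression V T y)‖ ^ 2 := by
        rw [norm_sq_eq_add_norm_sq_starProjection (x - y) V]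
        linarith [mul_le_mul_of_nonneg_left hres hc]

end Compression

theorem stmt0_general {H : Type*} [NormedAddCommGroup H] [InnerProductSpace ℝ H]
    (V : Submodule ℝ H) [CompleteSpace V]
    (T : H → H) (α : ℝ) (hα : α ∈ Set.Ioo (0 : ℝ) 1)
    (hT : ∀ x y : H, ‖T x - T y‖ ^ 2 ≤
      ‖x - y‖ ^ 2 - ((1 - α) / α) * ‖(x - T x) - (y - T y)‖ ^ 2)
    (M : H → H)
    (hM : ∀ x : H, M x = (Submodule.orthogonalProjection V (T (Submodule.orthogonalProjection V x)) : H)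
      + (x - (Submodule.orthogonalProjection V x : H))) :
    ∀ x y : H, ‖M x - M y‖ ^ 2 ≤
      ‖x - y‖ ^ 2 - ((1 - α) / α) * ‖(x - M x) - (y - M y)‖ ^ 2 := by
  have hM' : M = compression V T := funext fun x => by
    rw [hM, compression, starProjection_orthogonal_val]
    rfl
  rw [hM']
  exact isAveragedNonexpansive_compression V hT ⟨hα.1, hα.2.le⟩

theorem stmt0 {H : Type*} [NormedAddCommGroup H] [InnerProductSpace ℝ H] [CompleteSpace H]
    (V : Submodule ℝ H) [CompleteSpace V]
    (T : H → H) (α : ℝ) (hα : α ∈ Set.Ioo (0 : ℝ) 1)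
    (hT : ∀ x y : H, ‖T x - T y‖ ^ 2 ≤
      ‖x - y‖ ^ 2 - ((1 - α) / α) * ‖(x - T x) - (y - T y)‖ ^ 2)
    (M : H → H)
    (hM : ∀ x : H, M x = (Submodule.orthogonalProjection V (T (Submodule.orthogonalProjection V x)) : H)
      + (x - (Submodule.orthogonalProjection V x : H))) :
    ∀ x y : H, ‖M x - M y‖ ^ 2 ≤
      ‖x - y‖ ^ 2 - ((1 - α) / α) * ‖(x - M x) - (y - M y)‖ ^ 2 :=
  stmt0_general V T α hα hT M hM
end

section
/- Let H be a real Hilbert space, F ∈ Γ₀(H), G ∈ Γ₀(G) for a real Hilbert space G, and ℓ ∈ Γ₀(G) δ-strongly convex. Then ∂(G □ ℓ) = ((∂G)⁻¹ + (∂ℓ)⁻¹)⁻¹, where G □ ℓ denotes the infimal convolution (G □ ℓ)(y) = inf_z (G(z) + ℓ(y − z)). -/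
/-!
The inclusion `⊇` is the sum rule: adding the subgradient inequalities of `G` at `a` and of `ℓ`
at `b` gives one for `G □ ℓ` at `a + b`. For `⊆`, strong convexity of `ℓ` makes
`z ↦ G z + ℓ (y - z)` strongly convex, proper and lower semicontinuous, so it attains its infimum
at some `z`: it is bounded below by a Hahn–Banach affine minorant plus the quadratic gain of strong
convexity, and along a minimizing sequence the midpoint inequality forces the Cauchy property.
Exactness `(G □ ℓ) y = G z + ℓ (y - z)` then splits every subgradient of `G □ ℓ` at `y` into a
subgradient of `G` at `z` and one of `ℓ` at `y - z`.
-/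

open scoped RealInnerProductSpace Pointwise

/-- Convex subdifferential of an extended-real-valued function. -/
def subdiff {G : Type*} [NormedAddCommGroup G] [InnerProductSpace ℝ G]
    (f : G → EReal) (x : G) : Set G :=
  {u | ∀ y : G, f x + ((⟪u, y - x⟫ : ℝ) : EReal) ≤ f y}

/-- Inverse of a set-valued operator. -/
def svInv {G : Type*} (A : G → Set G) : G → Set G := fun u => {x | u ∈ A x}

open Filter Topology

theorem EReal.coe_mul_add_of_nonneg {a : ℝ} (ha : 0 ≤ a) (x y : EReal) :
    (a : EReal) * (x + y) = a * x + a * y :=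
  EReal.left_distrib_of_nonneg_of_ne_top (EReal.coe_nonneg.2 ha) (EReal.coe_ne_top a) x y

section Convexity

variable {E : Type*}

def IsProperFun (f : E → EReal) : Prop := (∃ x, f x ≠ ⊤) ∧ ∀ x, f x ≠ ⊥

variable [AddCommGroup E] [Module ℝ E]

def IsConvexFun (f : E → EReal) : Prop :=
  ∀ (x y : E) (a b : ℝ), 0 ≤ a → 0 ≤ b → a + b = 1 →
    f (a • x + b • y) ≤ (a : EReal) * f x + (b : EReal) * f y

variable [Norm E]

def IsStrongConvexFun (δ : ℝ) (f : E → EReal) : Prop :=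
  ∀ (x y : E) (a b : ℝ), 0 ≤ a → 0 ≤ b → a + b = 1 →
    f (a • x + b • y) + ((δ / 2 * a * b * ‖x - y‖ ^ 2 : ℝ) : EReal)
      ≤ (a : EReal) * f x + (b : EReal) * f y

theorem IsStrongConvexFun.isConvexFun {δ : ℝ} {f : E → EReal} (hf : IsStrongConvexFun δ f)
    (hδ : 0 ≤ δ) : IsConvexFun f := by
  intro x y a b ha hb hab
  refine le_trans ?_ (hf x y a b ha hb hab)
  apply le_add_of_nonneg_right
  exact_mod_cast (by positivity : (0 : ℝ) ≤ δ / 2 * a * b * ‖x - y‖ ^ 2)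

theorem IsConvexFun.add_isStrongConvexFun {δ : ℝ} {f g : E → EReal} (hf : IsConvexFun f)
    (hg : IsStrongConvexFun δ g) : IsStrongConvexFun δ (f + g) := by
  intro x y a b ha hb hab
  calc (f + g) (a • x + b • y) + ((δ / 2 * a * b * ‖x - y‖ ^ 2 : ℝ) : EReal)
      = f (a • x + b • y) + (g (a • x + b • y) + ((δ / 2 * a * b * ‖x - y‖ ^ 2 : ℝ) : EReal)) :=
        add_assoc _ _ _
    _ ≤ (a * f x + b * f y) + (a * g x + b * g y) :=
        add_le_add (hf x y a b ha hb hab) (hg x y a b ha hb hab)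
    _ = a * (f + g) x + b * (f + g) y := by
        simp only [Pi.add_apply, EReal.coe_mul_add_of_nonneg ha, EReal.coe_mul_add_of_nonneg hb]
        abel

end Convexity

theorem IsStrongConvexFun.comp_const_sub {E : Type*} [SeminormedAddCommGroup E] [Module ℝ E]
    {δ : ℝ} {f : E → EReal} (hf : IsStrongConvexFun δ f) (y : E) :
    IsStrongConvexFun δ fun z => f (y - z) := by
  intro x x' a b ha hb hab
  have harg : y - (a • x + b • x') = a • (y - x) + b • (y - x') := by
    calc y - (a • x + b • x') = (a + b) • y - (a • x + b • x') := by rw [hab, one_smul]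
      _ = a • (y - x) + b • (y - x') := by module
  have hnorm : ‖(y - x) - (y - x')‖ = ‖x - x'‖ := by rw [sub_sub_sub_cancel_left, norm_sub_rev]
  simpa only [harg, hnorm] using hf (y - x) (y - x') a b ha hb hab

theorem LowerSemicontinuous.isClosed_realEpigraph {E : Type*} [TopologicalSpace E] {f : E → EReal}
    (hf : LowerSemicontinuous f) : IsClosed {p : E × ℝ | f p.1 ≤ p.2} :=
  hf.isClosed_epigraph.preimage
    (continuous_fst.prodMk (continuous_coe_real_ereal.comp continuous_snd))

section AffineMinorant

variable {E : Type*} [AddCommGroup E] [Module ℝ E]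

theorem IsConvexFun.convex_realEpigraph {f : E → EReal} (hf : IsConvexFun f) :
    Convex ℝ {p : E × ℝ | f p.1 ≤ p.2} := by
  rintro ⟨x, s⟩ (hx : f x ≤ s) ⟨y, t⟩ (hy : f y ≤ t) a b ha hb hab
  show f (a • x + b • y) ≤ ((a * s + b * t : ℝ) : EReal)
  calc f (a • x + b • y) ≤ a * f x + b * f y := hf x y a b ha hb hab
    _ ≤ a * s + b * t := by gcongr
    _ = ((a * s + b * t : ℝ) : EReal) := by norm_cast

variable [TopologicalSpace E] [IsTopologicalAddGroup E] [ContinuousSMul ℝ E]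
  [LocallyConvexSpace ℝ E]

theorem IsProperFun.exists_affine_le {f : E → EReal} (hf : IsProperFun f)
    (hlsc : LowerSemicontinuous f) (hconv : IsConvexFun f) :
    ∃ (g : StrongDual ℝ E) (c : ℝ), ∀ z, ((g z + c : ℝ) : EReal) ≤ f z := by
  obtain ⟨⟨x₀, hx₀⟩, hbot⟩ := hf
  set r := (f x₀).toReal
  have hr : f x₀ = r := (EReal.coe_toReal hx₀ (hbot x₀)).symm
  obtain ⟨φ, u, hφx₀, hφepi⟩ := geometric_hahn_banach_point_closed hconv.convex_realEpigraph
    hlsc.isClosed_realEpigraph (x := (x₀, r - 1))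
    (show ¬ f x₀ ≤ ((r - 1 : ℝ) : EReal) by rw [hr, EReal.coe_le_coe_iff]; linarith)
  -- `φ` separates `(x₀, r - 1)` from the epigraph, so its vertical slope `s` is positive and
  -- `u < φ (z, f z)` can be solved for `f z`.
  set s := φ (0, 1)
  have hφ (z : E) (t : ℝ) : φ (z, t) = φ (z, 0) + t * s := by
    rw [← smul_eq_mul, ← map_smul, ← map_add, Prod.smul_mk, smul_zero, smul_eq_mul, mul_one,
      Prod.mk_add_mk, add_zero, zero_add]
  have hs : 0 < s := by
    have := hφepi (x₀, r) (by simp [hr])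
    rw [hφ] at this hφx₀
    linarith
  refine ⟨-s⁻¹ • φ.comp (.inl ℝ E ℝ), u / s, fun z => ?_⟩
  rcases eq_or_ne (f z) ⊤ with htop | htop
  · simp [htop]
  rw [← EReal.coe_toReal htop (hbot z), EReal.coe_le_coe_iff]
  have := hφepi (z, (f z).toReal) (by simp [EReal.coe_toReal htop (hbot z)])
  rw [hφ] at this
  simp only [FunLike.coe_smul, Pi.smul_apply, ContinuousLinearMap.comp_apply,
    ContinuousLinearMap.inl_apply, smul_eq_mul]
  rw [neg_mul, ← div_eq_inv_mul, ← sub_eq_neg_add, ← sub_div, div_le_iff₀ hs]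
  linarith

end AffineMinorant

theorem LowerSemicontinuous.le_of_tendsto_of_le_add {X ι : Type*} [TopologicalSpace X]
    {f : X → EReal} (hf : LowerSemicontinuous f) {l : Filter ι} [l.NeBot] {x : ι → X} {a : X}
    (hx : Tendsto x l (𝓝 a)) {m : ℝ} {ε : ι → ℝ} (hε : Tendsto ε l (𝓝 0))
    (hfx : ∀ i, f (x i) ≤ ((m + ε i : ℝ) : EReal)) : f a ≤ m := by
  by_contra! hlt
  obtain ⟨q, hmq, hqa⟩ := EReal.exists_between_coe_real hlt
  rw [EReal.coe_lt_coe_iff] at hmq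
  have hfar : ∀ᶠ i in l, (q : EReal) < f (x i) := hx.eventually (hf a q hqa)
  have hnear : ∀ᶠ i in l, m + ε i < q :=
    (hε.const_add m).eventually (gt_mem_nhds (by simpa using hmq))
  obtain ⟨i, hfar, hnear⟩ := (hfar.and hnear).exists
  exact absurd (hfar.trans_le (hfx i)) (not_lt.2 (EReal.coe_le_coe_iff.2 hnear.le))

namespace IsStrongConvexFun

variable {E : Type*} [NormedAddCommGroup E] [NormedSpace ℝ E] {δ : ℝ} {f : E → EReal}

theorem add_norm_sub_sq_le (hf : IsStrongConvexFun δ f) {x y : E} {b s t : ℝ}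
    (hb : (b : EReal) ≤ f ((1 / 2 : ℝ) • x + (1 / 2 : ℝ) • y)) (hx : f x ≤ s) (hy : f y ≤ t) :
    b + δ / 8 * ‖x - y‖ ^ 2 ≤ (s + t) / 2 := by
  have key := calc ((b + δ / 8 * ‖x - y‖ ^ 2 : ℝ) : EReal)
      = b + ((δ / 2 * (1 / 2) * (1 / 2) * ‖x - y‖ ^ 2 : ℝ) : EReal) := by norm_cast; ring_nf
    _ ≤ f ((1 / 2 : ℝ) • x + (1 / 2 : ℝ) • y)
          + ((δ / 2 * (1 / 2) * (1 / 2) * ‖x - y‖ ^ 2 : ℝ) : EReal) := by gcongr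
    _ ≤ ((1 / 2 : ℝ) : EReal) * f x + ((1 / 2 : ℝ) : EReal) * f y :=
        hf x y _ _ (by norm_num) (by norm_num) (by norm_num)
    _ ≤ ((1 / 2 : ℝ) : EReal) * s + ((1 / 2 : ℝ) : EReal) * t := by gcongr
    _ = ((s + t) / 2 : ℝ) := by norm_cast; ring
  exact_mod_cast key

theorem exists_forall_coe_le (hf : IsStrongConvexFun δ f) (hδ : 0 < δ) (hp : IsProperFun f)
    (hlsc : LowerSemicontinuous f) : ∃ B : ℝ, ∀ z, (B : EReal) ≤ f z := by
  obtain ⟨g, c, hgc⟩ := hp.exists_affine_le hlsc (hf.isConvexFun hδ.le)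
  obtain ⟨⟨z₀, hz₀⟩, hbot⟩ := hp
  set r₀ := (f z₀).toReal
  -- The affine minorant at the midpoint of `z₀` and `z`, plus the quadratic gain, bounds `f z`
  -- below by a quadratic in `‖z₀ - z‖`; the constant is its minimum.
  refine ⟨2 * g z₀ + 2 * c - r₀ - ‖g‖ ^ 2 / δ, fun z => ?_⟩
  rcases eq_or_ne (f z) ⊤ with htop | htop
  · simp [htop]
  rw [← EReal.coe_toReal htop (hbot z), EReal.coe_le_coe_iff]
  have hmid := hf.add_norm_sub_sq_le (hgc _) (EReal.coe_toReal hz₀ (hbot z₀)).ge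
    (EReal.coe_toReal htop (hbot z)).ge
  have hgz : g z₀ - ‖g‖ * ‖z₀ - z‖ ≤ g z := by
    have := (le_abs_self _).trans (g.le_opNorm (z₀ - z))
    rw [map_sub] at this
    linarith
  have hsq : 0 ≤ (δ * ‖z₀ - z‖ - 2 * ‖g‖) ^ 2 / (4 * δ) := by positivity
  have hsq' : (δ * ‖z₀ - z‖ - 2 * ‖g‖) ^ 2 / (4 * δ)
      = δ / 4 * ‖z₀ - z‖ ^ 2 - ‖g‖ * ‖z₀ - z‖ + ‖g‖ ^ 2 / δ := by
    field_simp; ring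
  simp only [map_add, map_smul, smul_eq_mul] at hmid
  linarith

theorem exists_forall_le [CompleteSpace E] (hf : IsStrongConvexFun δ f) (hδ : 0 < δ)
    (hp : IsProperFun f) (hlsc : LowerSemicontinuous f) : ∃ x, ∀ z, f x ≤ f z := by
  obtain ⟨B, hB⟩ := hf.exists_forall_coe_le hδ hp hlsc
  obtain ⟨⟨z₀, hz₀⟩, -⟩ := hp
  have hinf_ne_bot : ⨅ z, f z ≠ ⊥ := ne_bot_of_le_ne_bot (EReal.coe_ne_bot B) (le_iInf hB)
  have hinf_ne_top : ⨅ z, f z ≠ ⊤ := ne_top_of_le_ne_top hz₀ (iInf_le f z₀)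
  set m := (⨅ z, f z).toReal
  have hm : ∀ z, (m : EReal) ≤ f z := by
    simpa only [m, EReal.coe_toReal hinf_ne_top hinf_ne_bot] using iInf_le f
  set ε : ℕ → ℝ := fun n => 1 / (n + 1)
  have hε : Tendsto ε atTop (𝓝 0) := tendsto_one_div_add_atTop_nhds_zero_nat
  have hseq : ∀ n, ∃ x, f x ≤ ((m + ε n : ℝ) : EReal) := fun n => by
    have : ⨅ z, f z < ((m + ε n : ℝ) : EReal) := by
      rw [← EReal.coe_toReal hinf_ne_top hinf_ne_bot, EReal.coe_lt_coe_iff]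
      simp only [m, ε]
      linarith [Nat.one_div_pos_of_nat (α := ℝ) (n := n)]
    obtain ⟨x, hx⟩ := iInf_lt_iff.1 this
    exact ⟨x, hx.le⟩
  choose x hx using hseq
  -- Strong convexity at the midpoint of two almost-minimizers forces them to be close.
  have hclose : ∀ n k, n ≤ k → dist (x n) (x k) ≤ √(8 / δ * ε n) := by
    intro n k hnk
    have hεk : ε k ≤ ε n := Nat.one_div_le_one_div hnk
    have := hf.add_norm_sub_sq_le (hm _) (hx n) (hx k)
    rw [dist_eq_norm, Real.le_sqrt (norm_nonneg _) (by positivity), div_mul_eq_mul_div,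
      le_div_iff₀ hδ]
    linarith
  have hcauchy : CauchySeq x := cauchySeq_of_le_tendsto_0' _ hclose (by
    simpa [Function.comp_def] using (Real.continuous_sqrt.tendsto _).comp (hε.const_mul (8 / δ)))
  obtain ⟨xb, hxb⟩ := cauchySeq_tendsto_of_complete hcauchy
  exact ⟨xb, fun z => (hlsc.le_of_tendsto_of_le_add hxb hε hx).trans (hm z)⟩

end IsStrongConvexFun

noncomputable def infConv {E : Type*} [Sub E] (f g : E → EReal) (w : E) : EReal :=
  ⨅ z, f z + g (w - z)

section InfConv

variable {E : Type*} [NormedAddCommGroup E] {f g : E → EReal}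

theorem infConv_le (f g : E → EReal) (w z : E) : infConv f g w ≤ f z + g (w - z) :=
  iInf_le _ z

theorem infConv_add_ne_top {x y : E} (hx : f x ≠ ⊤) (hy : g y ≠ ⊤) : infConv f g (x + y) ≠ ⊤ :=
  ne_top_of_le_ne_top (EReal.add_lt_top hx hy).ne
    (by simpa only [add_sub_cancel_left] using infConv_le f g (x + y) x)

theorem exists_infConv_eq_add [NormedSpace ℝ E] [CompleteSpace E] {δ : ℝ} (hδ : 0 < δ)
    (hf : ∀ x, f x ≠ ⊥) (hflsc : LowerSemicontinuous f) (hfconv : IsConvexFun f)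
    (hg : ∀ x, g x ≠ ⊥) (hglsc : LowerSemicontinuous g) (hgconv : IsStrongConvexFun δ g) {y : E}
    (hy : infConv f g y ≠ ⊤) : ∃ z, infConv f g y = f z + g (y - z) := by
  set h : E → EReal := f + fun z => g (y - z)
  have hconv : IsStrongConvexFun δ h := hfconv.add_isStrongConvexFun (hgconv.comp_const_sub y)
  have hproper : IsProperFun h := by
    refine ⟨?_, fun z => EReal.add_ne_bot_iff.2 ⟨hf z, hg (y - z)⟩⟩
    by_contra! htop
    exact hy (iInf_eq_top.2 htop)
  have hlsc : LowerSemicontinuous h :=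
    hflsc.add' (hglsc.comp (continuous_const.sub continuous_id))
      fun z => EReal.continuousAt_add (.inr (hg _)) (.inl (hf z))
  obtain ⟨z, hz⟩ := hconv.exists_forall_le hδ hproper hlsc
  exact ⟨z, le_antisymm (infConv_le f g y z) (le_iInf hz)⟩

variable [InnerProductSpace ℝ E] {u : E}

theorem ne_top_of_mem_subdiff {x y : E} (hu : u ∈ subdiff f y) (hx : f x ≠ ⊤) : f y ≠ ⊤ := by
  intro htop
  have := hu x
  rw [htop, EReal.top_add_coe, top_le_iff] at this
  exact hx this

theorem mem_subdiff_infConv_add {a b : E} (ha : u ∈ subdiff f a) (hb : u ∈ subdiff g b) :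
    u ∈ subdiff (infConv f g) (a + b) := by
  intro w
  refine le_iInf fun z => ?_
  have hinner : ⟪u, w - (a + b)⟫ = ⟪u, z - a⟫ + ⟪u, w - z - b⟫ := by
    rw [← inner_add_right]; congr 1; abel
  calc infConv f g (a + b) + ((⟪u, w - (a + b)⟫ : ℝ) : EReal)
      ≤ f a + g b + (((⟪u, z - a⟫ : ℝ) : EReal) + ((⟪u, w - z - b⟫ : ℝ) : EReal)) := by
        rw [hinner, EReal.coe_add]
        gcongr
        simpa only [add_sub_cancel_left] using infConv_le f g (a + b) a
    _ = (f a + ((⟪u, z - a⟫ : ℝ) : EReal)) + (g b + ((⟪u, w - z - b⟫ : ℝ) : EReal)) :=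
        add_add_add_comm _ _ _ _
    _ ≤ f z + g (w - z) := add_le_add (ha z) (hb (w - z))

theorem mem_subdiff_of_infConv_eq_add {y z : E} (hmin : infConv f g y = f z + g (y - z))
    (hy : infConv f g y ≠ ⊤) (hf : f z ≠ ⊥) (hg : g (y - z) ≠ ⊥)
    (hu : u ∈ subdiff (infConv f g) y) : u ∈ subdiff f z ∧ u ∈ subdiff g (y - z) := by
  obtain ⟨hf', hg'⟩ := (EReal.add_ne_top_iff_ne_top₂ hf hg).1 (hmin ▸ hy)
  obtain ⟨r, hr⟩ : ∃ r : ℝ, f z = r := ⟨_, (EReal.coe_toReal hf' hf).symm⟩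
  obtain ⟨s, hs⟩ : ∃ s : ℝ, g (y - z) = s := ⟨_, (EReal.coe_toReal hg' hg).symm⟩
  rw [hr, hs] at hmin
  constructor
  · intro v
    rw [hr, ← (EReal.addLECancellable_coe s).add_le_add_iff_left]
    calc (s : EReal) + (r + ((⟪u, v - z⟫ : ℝ) : EReal))
        = infConv f g y + ((⟪u, (y + v - z) - y⟫ : ℝ) : EReal) := by
          rw [hmin, show y + v - z - y = v - z by abel]; ac_rfl
      _ ≤ infConv f g (y + v - z) := hu _
      _ ≤ f v + g (y + v - z - v) := infConv_le _ _ _ _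
      _ = s + f v := by rw [show y + v - z - v = y - z by abel, hs, add_comm]
  · intro v
    rw [hs, ← (EReal.addLECancellable_coe r).add_le_add_iff_left]
    calc (r : EReal) + (s + ((⟪u, v - (y - z)⟫ : ℝ) : EReal))
        = infConv f g y + ((⟪u, (v + z) - y⟫ : ℝ) : EReal) := by
          rw [hmin, show v + z - y = v - (y - z) by abel]; ac_rfl
      _ ≤ infConv f g (v + z) := hu _
      _ ≤ f z + g (v + z - z) := infConv_le _ _ _ _
      _ = r + g v := by rw [add_sub_cancel_right, hr]

end InfConv

theorem stmt8_general {G : Type*}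
    [NormedAddCommGroup G] [InnerProductSpace ℝ G] [CompleteSpace G]
    (Gf ℓ : G → EReal) (δ : ℝ) (hδ : 0 < δ)
    (hGproper : (∃ x, Gf x ≠ ⊤) ∧ ∀ x, Gf x ≠ ⊥)
    (hGlsc : LowerSemicontinuous Gf)
    (hGconvex : ∀ (x y : G) (a b : ℝ), 0 ≤ a → 0 ≤ b → a + b = 1 →
      Gf (a • x + b • y) ≤ (a : EReal) * Gf x + (b : EReal) * Gf y)
    (hℓproper : (∃ x, ℓ x ≠ ⊤) ∧ ∀ x, ℓ x ≠ ⊥)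
    (hℓlsc : LowerSemicontinuous ℓ)
    (hℓstrong : ∀ (x y : G) (a b : ℝ), 0 ≤ a → 0 ≤ b → a + b = 1 →
      ℓ (a • x + b • y) + ((δ / 2 * a * b * ‖x - y‖ ^ 2 : ℝ) : EReal)
        ≤ (a : EReal) * ℓ x + (b : EReal) * ℓ y) :
    ∀ y : G, subdiff (fun w => ⨅ z : G, Gf z + ℓ (w - z)) y =
      svInv (fun u => svInv (subdiff Gf) u + svInv (subdiff ℓ) u) y := by
  obtain ⟨⟨x₀, hx₀⟩, hGbot⟩ := hGproper
  obtain ⟨⟨x₁, hx₁⟩, hℓbot⟩ := hℓproper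
  intro y
  ext u
  simp only [svInv, Set.mem_ofPred_eq, Set.mem_add]
  constructor
  · intro hu
    have hy : infConv Gf ℓ y ≠ ⊤ := ne_top_of_mem_subdiff hu (infConv_add_ne_top hx₀ hx₁)
    obtain ⟨z, hz⟩ := exists_infConv_eq_add hδ hGbot hGlsc hGconvex hℓbot hℓlsc hℓstrong hy
    obtain ⟨hGu, hℓu⟩ := mem_subdiff_of_infConv_eq_add hz hy (hGbot z) (hℓbot _) hu
    exact ⟨z, hGu, y - z, hℓu, add_sub_cancel z y⟩
  · rintro ⟨a, ha, b, hb, rfl⟩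
    exact mem_subdiff_infConv_add ha hb

theorem stmt8 {H G : Type*}
    [NormedAddCommGroup H] [InnerProductSpace ℝ H] [CompleteSpace H]
    [NormedAddCommGroup G] [InnerProductSpace ℝ G] [CompleteSpace G]
    (F : H → EReal)
    (hFproper : (∃ x, F x ≠ ⊤) ∧ ∀ x, F x ≠ ⊥)
    (hFlsc : LowerSemicontinuous F)
    (hFconvex : ∀ (x y : H) (a b : ℝ), 0 ≤ a → 0 ≤ b → a + b = 1 →
      F (a • x + b • y) ≤ (a : EReal) * F x + (b : EReal) * F y)
    (Gf ℓ : G → EReal) (δ : ℝ) (hδ : 0 < δ)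
    (hGproper : (∃ x, Gf x ≠ ⊤) ∧ ∀ x, Gf x ≠ ⊥)
    (hGlsc : LowerSemicontinuous Gf)
    (hGconvex : ∀ (x y : G) (a b : ℝ), 0 ≤ a → 0 ≤ b → a + b = 1 →
      Gf (a • x + b • y) ≤ (a : EReal) * Gf x + (b : EReal) * Gf y)
    (hℓproper : (∃ x, ℓ x ≠ ⊤) ∧ ∀ x, ℓ x ≠ ⊥)
    (hℓlsc : LowerSemicontinuous ℓ)
    (hℓstrong : ∀ (x y : G) (a b : ℝ), 0 ≤ a → 0 ≤ b → a + b = 1 →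
      ℓ (a • x + b • y) + ((δ / 2 * a * b * ‖x - y‖ ^ 2 : ℝ) : EReal)
        ≤ (a : EReal) * ℓ x + (b : EReal) * ℓ y) :
    ∀ y : G, subdiff (fun w => ⨅ z : G, Gf z + ℓ (w - z)) y =
      svInv (fun u => svInv (subdiff Gf) u + svInv (subdiff ℓ) u) y :=
  stmt8_general Gf ℓ δ hδ hGproper hGlsc hGconvex hℓproper hℓlsc hℓstrong
end

section
/- Let H be a real Hilbert space, A : H ⇒ H a maximally monotone operator, V ⊂ H a closed vector subspace, and τ > 0. Then the resolvent of the partial inverse satisfies J_{(τA)_V}(z) = (2P_V − Id) J_{τA}(z) + P_{V⊥} z for all z ∈ H, where the partial inverse A_V is defined by its graph: (x,u) ∈ gra A_V iff (P_V x + P_{V⊥} u, P_V u + P_{V⊥} x) ∈ gra A. -/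
open scoped RealInnerProductSpace Pointwise

/-- Partial inverse of a set-valued operator `A` with respect to a closed subspace `V`:
`(x, u) ∈ gra A_V ↔ (P_V x + P_{V⊥} u, P_V u + P_{V⊥} x) ∈ gra A`. -/
def partialInv {H : Type*} [NormedAddCommGroup H] [InnerProductSpace ℝ H] [CompleteSpace H]
    (A : H → Set H) (V : Submodule ℝ H) [CompleteSpace V] : H → Set H :=
  fun x => {u | ((V.orthogonalProjection u : H) + (x - (V.orthogonalProjection x : H)))
    ∈ A ((V.orthogonalProjection x : H) + (u - (V.orthogonalProjection u : H)))}

theorem stmt16 {H : Type*} [NormedAddCommGroup H] [InnerProductSpace ℝ H] [CompleteSpace H]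
    (A : H → Set H) (V : Submodule ℝ H) [CompleteSpace V] (τ : ℝ) (hτ : 0 < τ)
    (hmono : ∀ x y u v : H, u ∈ A x → v ∈ A y → 0 ≤ ⟪x - y, u - v⟫)
    (hmax : ∀ x u : H, (∀ y v : H, v ∈ A y → 0 ≤ ⟪x - y, u - v⟫) → u ∈ A x)
    (J₁ J₂ : H → H)
    (hJ₁ : ∀ z : H, z - J₁ z ∈ τ • A (J₁ z))
    (hJ₂ : ∀ z : H, z - J₂ z ∈ partialInv (fun w => τ • A w) V (J₂ z)) :
    ∀ z : H, J₂ z = ((2 : ℝ) • (V.orthogonalProjection (J₁ z) : H) - J₁ z)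
      + (z - (V.orthogonalProjection z : H)) := by
  intro z
  set Q : H → H := fun w => (V.orthogonalProjection w : H) with hQdef
  have hadd : ∀ a b : H, Q (a + b) = Q a + Q b := by intro a b; simp [hQdef]
  have hsub : ∀ a b : H, Q (a - b) = Q a - Q b := by intro a b; simp [hQdef]
  have hsmul : ∀ (c : ℝ) (a : H), Q (c • a) = c • Q a := by intro c a; simp [hQdef]
  have hQQ : ∀ a : H, Q (Q a) = Q a := by intro a; exact V.starProjection_eq_self_iff.mpr (SetLike.coe_mem _)
  have horth : ∀ a b : H, ⟪a - Q a, Q b⟫ = 0 := fun a b =>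
    V.starProjection_inner_eq_zero a _ (SetLike.coe_mem _)
  have hA : ∀ a b : H, ⟪a, Q b⟫ = ⟪Q a, Q b⟫ := by
    intro a b; have := horth a b; rw [inner_sub_left] at this; linarith
  have hB : ∀ a b : H, ⟪Q a, b⟫ = ⟪Q a, Q b⟫ := by
    intro a b; rw [real_inner_comm, hA, real_inner_comm]
  have hinner : ∀ p q : H, ⟪Q p + (q - Q q), Q q + (p - Q p)⟫ = ⟪p, q⟫ := by
    intro p q
    have f1 := hB p p
    have f2 := hA q q
    have f3 := hA q p
    have f4 := hB q p
    have f5 := real_inner_comm p q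
    have f6 := real_inner_comm (Q p) (Q q)
    simp only [inner_add_left, inner_add_right, inner_sub_left, inner_sub_right]
    linarith
  -- candidate
  set x := J₁ z with hx
  set b : H := ((2 : ℝ) • Q x - x) + (z - Q z) with hb
  have hQb : Q b = Q x := by
    rw [hb, hadd, hsub, hsub, hsmul, hQQ, hQQ]; module
  have hQzb : Q (z - b) = Q z - Q x := by rw [hsub, hQb]
  have harg : Q b + ((z - b) - Q (z - b)) = x := by
    rw [hQb, hQzb, hb, hx]; module
  have helt : Q (z - b) + (b - Q b) = z - x := by
    rw [hQb, hQzb, hb, hx]; module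
  have hv : z - b ∈ partialInv (fun w => τ • A w) V b := by
    show Q (z - b) + (b - Q b) ∈ τ • A (Q b + ((z - b) - Q (z - b)))
    rw [harg, helt]; exact hJ₁ z
  -- uniqueness
  set a := J₂ z with ha
  have hu : z - a ∈ partialInv (fun w => τ • A w) V a := hJ₂ z
  have hu' : Q (z - a) + (a - Q a) ∈ τ • A (Q a + ((z - a) - Q (z - a))) := hu
  have hv' : Q (z - b) + (b - Q b) ∈ τ • A (Q b + ((z - b) - Q (z - b))) := hv
  obtain ⟨s₁, hs₁, hs₁'⟩ := hu'
  obtain ⟨s₂, hs₂, hs₂'⟩ := hv'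
  have hs₁'' : τ • s₁ = Q (z - a) + (a - Q a) := hs₁'
  have hs₂'' : τ • s₂ = Q (z - b) + (b - Q b) := hs₂'
  have key : (0:ℝ) ≤ ⟪a - b, (z - a) - (z - b)⟫ := by
    have h0 := hmono _ _ _ _ hs₁ hs₂
    have h1 : (0:ℝ) ≤ ⟪(Q a + ((z - a) - Q (z - a))) - (Q b + ((z - b) - Q (z - b))),
        τ • s₁ - τ • s₂⟫ := by
      rw [← smul_sub, real_inner_smul_right]
      exact mul_nonneg hτ.le h0
    rw [hs₁'', hs₂''] at h1
    have e1 : (Q a + ((z - a) - Q (z - a))) - (Q b + ((z - b) - Q (z - b)))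
        = Q (a - b) + (((z - a) - (z - b)) - Q ((z - a) - (z - b))) := by
      rw [hsub (z - a) (z - b), hsub z a, hsub z b, hsub a b]; abel
    have e2 : (Q (z - a) + (a - Q a)) - (Q (z - b) + (b - Q b))
        = Q ((z - a) - (z - b)) + ((a - b) - Q (a - b)) := by
      rw [hsub (z - a) (z - b), hsub z a, hsub z b, hsub a b]; abel
    rw [e1, e2, hinner] at h1
    exact h1
  have hzero : a - b = 0 := by
    have : ⟪a - b, (z - a) - (z - b)⟫ = -⟪a - b, a - b⟫ := by
      have : (z - a) - (z - b) = -(a - b) := by abel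
      rw [this, inner_neg_right]
    rw [this] at key
    have := real_inner_self_nonneg (x := a - b)
    have hz : ⟪a - b, a - b⟫ = 0 := le_antisymm (by linarith) this
    exact inner_self_eq_zero.mp hz
  have : a = b := sub_eq_zero.mp hzero
  rw [ha] at this
  exact this
end

section
/- Let H be a real Hilbert space, V a closed vector subspace, and T : H → H a nonexpansive operator with Fix T ∩ V ≠ ∅. Then Fix(P_V ∘ T) = V ∩ Fix T. -/
/-!
If `x = P_V (T x)` and `z ∈ V` is fixed by `T`, Pythagoras gives
`‖T x - z‖² = ‖T x - x‖² + ‖x - z‖²`, while nonexpansiveness gives `‖T x - z‖ ≤ ‖x - z‖`;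
hence `T x = x`.
-/

namespace Submodule

variable {𝕜 E : Type*} [RCLike 𝕜] [NormedAddCommGroup E] [InnerProductSpace 𝕜 E]
  (K : Submodule 𝕜 E) [K.HasOrthogonalProjection]

theorem norm_sub_sq_eq_norm_sub_starProjection_sq_add (y : E) {z : E} (hz : z ∈ K) :
    ‖y - z‖ ^ 2 = ‖y - K.starProjection y‖ ^ 2 + ‖K.starProjection y - z‖ ^ 2 := by
  have horth : inner 𝕜 (y - K.starProjection y) (K.starProjection y - z) = 0 :=
    K.starProjection_inner_eq_zero y _ (K.sub_mem (K.starProjection_apply_mem y) hz)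
  rw [← sub_add_sub_cancel y (K.starProjection y) z, sq, sq, sq,
    norm_add_sq_eq_norm_sq_add_norm_sq_of_inner_eq_zero _ _ horth]

theorem starProjection_eq_self_of_norm_sub_le {y z : E} (hz : z ∈ K)
    (h : ‖y - z‖ ≤ ‖K.starProjection y - z‖) : K.starProjection y = y := by
  have hpyth := K.norm_sub_sq_eq_norm_sub_starProjection_sq_add y hz
  have hsq := pow_le_pow_left₀ (norm_nonneg _) h 2
  have hdist : ‖y - K.starProjection y‖ = 0 := by
    nlinarith [norm_nonneg (y - K.starProjection y)]
  exact (sub_eq_zero.mp (norm_eq_zero.mp hdist)).symm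

end Submodule

theorem stmt18_general {H : Type*} [NormedAddCommGroup H] [InnerProductSpace ℝ H]
    (V : Submodule ℝ H) [CompleteSpace V]
    (T : H → H)
    (hT : ∀ x y : H, ‖T x - T y‖ ≤ ‖x - y‖)
    (hfix : ∃ x : H, T x = x ∧ x ∈ V) :
    ∀ x : H, (V.orthogonalProjectionOnto (T x) : H) = x ↔ (x ∈ V ∧ T x = x) := by
  obtain ⟨z, hTz, hzV⟩ := hfix
  intro x
  change V.starProjection (T x) = x ↔ _
  constructor
  · intro hx
    have hxV : x ∈ V := hx ▸ V.starProjection_apply_mem (T x)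
    have hTx : V.starProjection (T x) = T x :=
      V.starProjection_eq_self_of_norm_sub_le hzV (by simpa [hx, hTz] using hT x z)
    exact ⟨hxV, hTx.symm.trans hx⟩
  · rintro ⟨hxV, hTx⟩
    rw [hTx]
    exact V.starProjection_eq_self_iff.mpr hxV

theorem stmt18 {H : Type*} [NormedAddCommGroup H] [InnerProductSpace ℝ H] [CompleteSpace H]
    (V : Submodule ℝ H) [CompleteSpace V]
    (T : H → H)
    (hT : ∀ x y : H, ‖T x - T y‖ ≤ ‖x - y‖)
    (hfix : ∃ x : H, T x = x ∧ x ∈ V) :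
    ∀ x : H, (V.orthogonalProjectionOnto (T x) : H) = x ↔ (x ∈ V ∧ T x = x) :=
  stmt18_general V T hT hfix
end
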